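/- On the doubly infinite Sierpinski gasket graph SG with α = log 3 / log 2, for every 1/n < ε < 1 the annulus satisfies |B_o(n)| − |B_o(n(1−ε))| ≤ 4 ε^{α−1} |B_o(n)|, where B_o(r) denotes the open ball of radius r centered at the origin in the graph metric. -/

import Mathlib

/-!
In the oblique coordinates `skew` the gasket becomes the lattice Sierpinski triangle, and the
graph distance from the origin to a vertex `p` is `|height p|`, the absolute value of the sum of
its oblique coordinates. Counting cells level by level then shows that the ball sizes
`b r = |B_o(r)|` satisfy `b 1 = 1` and `b r = 3^(j+1) + 2 b (r - 2^j)` for `2^j < r ≤ 2^(j+1)`.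

From this recursion alone, a strong induction on the dyadic scale `2^k < n ≤ 2^(k+1)` bounds
the window of width `2^(k+1-m)` below `n`:
`3^(m+1) (b n - b (n - 2^(k+1-m))) ≤ 2^(m+3) b n`. If the window stays above `2^k` it is twice
a window of the same width at a smaller scale; otherwise it is computed exactly, since the top
layer of `B_o(2^k)` of fixed depth doubles from one level to the next.
For `2^(-m-1) < ε ≤ 2^(-m)` the annulus lies in such a window, and
`(2/3)^(m+1) ≤ ε^(α-1)` because `2^(α-1) = 3/2`.
-/

open Finset

attribute [local instance] Classical.propDecidable

namespace IDLA

noncomputable section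

/-- Translate a set of points in the plane. -/
def trSet (a : ℝ × ℝ) (S : Set (ℝ × ℝ)) : Set (ℝ × ℝ) := (fun p => a + p) '' S

/-- Vertices of the level-`n` Sierpinski gasket graph. -/
def gasketV : ℕ → Set (ℝ × ℝ)
  | 0 => {(0, 0), (1, 0), (1 / 2, Real.sqrt 3 / 2)}
  | n + 1 =>
      gasketV n ∪ trSet ((2 : ℝ) ^ n, 0) (gasketV n) ∪
        trSet ((2 : ℝ) ^ n / 2, (2 : ℝ) ^ n / 2 * Real.sqrt 3) (gasketV n)

/-- Edges of the level-`n` Sierpinski gasket graph. -/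
def gasketE : ℕ → Set ((ℝ × ℝ) × (ℝ × ℝ))
  | 0 => {((0, 0), (1, 0)), ((0, 0), (1 / 2, Real.sqrt 3 / 2)),
      ((1, 0), (1 / 2, Real.sqrt 3 / 2))}
  | n + 1 =>
      gasketE n ∪
        (fun e => (((2 : ℝ) ^ n, 0) + e.1, ((2 : ℝ) ^ n, 0) + e.2)) '' gasketE n ∪
        (fun e => (((2 : ℝ) ^ n / 2, (2 : ℝ) ^ n / 2 * Real.sqrt 3) + e.1,
          ((2 : ℝ) ^ n / 2, (2 : ℝ) ^ n / 2 * Real.sqrt 3) + e.2)) '' gasketE n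

/-- Vertex set of the doubly infinite Sierpinski gasket graph. -/
def SGV : Set (ℝ × ℝ) := (⋃ n, gasketV n) ∪ (-(⋃ n, gasketV n))

/-- Edge set of the doubly infinite Sierpinski gasket graph. -/
def SGE : Set ((ℝ × ℝ) × (ℝ × ℝ)) :=
  (⋃ n, gasketE n) ∪ ((fun e => (-e.1, -e.2)) '' ⋃ n, gasketE n)

/-- The doubly infinite Sierpinski gasket graph `SG`. -/
def SGGraph : SimpleGraph SGV :=
  SimpleGraph.fromRel fun x y => ((x : ℝ × ℝ), (y : ℝ × ℝ)) ∈ SGE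

/-- The origin `o = (0,0)` of `SG`. -/
def oSG : SGV :=
  ⟨(0, 0), Or.inl (Set.mem_iUnion.mpr ⟨0, by simp [gasketV]⟩)⟩

end

lemma _root_.SimpleGraph.Walk.abs_sub_le_length {V : Type*} {G : SimpleGraph V} (f : V → ℝ)
    (hf : ∀ x y, G.Adj x y → |f x - f y| ≤ 1) {u v : V} (w : G.Walk u v) :
    |f u - f v| ≤ w.length := by
  induction w with
  | nil => simp
  | @cons x y z hxy w ih =>
    rw [SimpleGraph.Walk.length_cons, Nat.cast_succ]
    linarith [abs_sub_le (f x) (f y) (f z), hf x y hxy]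

lemma ncard_union_union_add {α : Type*} {A B C : Set α} (hA : A.Finite) (hB : B.Finite)
    (hC : C.Finite) :
    (A ∪ B ∪ C).ncard + (A ∩ B).ncard + (A ∩ C ∪ B ∩ C).ncard = A.ncard + B.ncard + C.ncard := by
  have hAB := Set.ncard_union_add_ncard_inter A B hA hB
  have hABC := Set.ncard_union_add_ncard_inter (A ∪ B) C (hA.union hB) hC
  rw [Set.union_inter_distrib_right] at hABC
  omega

noncomputable section

/-- Oblique coordinates: they send the unit cell `(0,0), (1,0), (1/2, √3/2)` of the gasket
to `(0,0), (1,0), (0,1)`, and its level-`n` cell to the lattice triangle of side `2^n`. -/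
def skew (p : ℝ × ℝ) : ℝ × ℝ := (p.1 - p.2 / √3, 2 * p.2 / √3)

def height (p : ℝ × ℝ) : ℝ := (skew p).1 + (skew p).2

def cornerR (n : ℕ) : ℝ × ℝ := ((2 : ℝ) ^ n, 0)

def cornerT (n : ℕ) : ℝ × ℝ := ((2 : ℝ) ^ n / 2, (2 : ℝ) ^ n / 2 * √3)

end

lemma gasketV_succ (n : ℕ) : gasketV (n + 1) =
    gasketV n ∪ trSet (cornerR n) (gasketV n) ∪ trSet (cornerT n) (gasketV n) := rfl

lemma gasketE_succ (n : ℕ) : gasketE (n + 1) = gasketE n ∪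
    (fun e => (cornerR n + e.1, cornerR n + e.2)) '' gasketE n ∪
    (fun e => (cornerT n + e.1, cornerT n + e.2)) '' gasketE n := rfl

lemma skew_add (p q : ℝ × ℝ) : skew (p + q) = skew p + skew q := by
  ext <;> simp only [skew, Prod.fst_add, Prod.snd_add] <;> ring

lemma skew_neg (p : ℝ × ℝ) : skew (-p) = -skew p := by
  ext <;> simp only [skew, Prod.fst_neg, Prod.snd_neg] <;> ring

lemma skew_injective : Function.Injective skew := by
  intro p q h
  have h3 : √3 ≠ 0 := by positivity
  have h2 : p.2 = q.2 := by
    have := congrArg Prod.snd h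
    simp only [skew] at this
    field_simp at this
    linarith
  have h1 : p.1 = q.1 := by
    have := congrArg Prod.fst h
    simp only [skew, h2] at this
    linarith
  exact Prod.ext h1 h2

lemma height_add (p q : ℝ × ℝ) : height (p + q) = height p + height q := by
  simp only [height, skew_add, Prod.fst_add, Prod.snd_add]; ring

lemma height_neg (p : ℝ × ℝ) : height (-p) = -height p := by
  simp only [height, skew_neg, Prod.fst_neg, Prod.snd_neg]; ring

@[simp] lemma skew_zero : skew 0 = 0 := by simp [skew]

@[simp] lemma skew_one : skew (1, 0) = (1, 0) := by simp [skew]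

@[simp] lemma skew_apex : skew (1 / 2, √3 / 2) = (0, 1) := by
  have h3 : √3 ≠ 0 := by positivity
  simp only [skew, Prod.mk.injEq]
  constructor
  · field_simp; ring
  · field_simp

@[simp] lemma skew_cornerR (n : ℕ) : skew (cornerR n) = (2 ^ n, 0) := by simp [skew, cornerR]

@[simp] lemma skew_cornerT (n : ℕ) : skew (cornerT n) = (0, 2 ^ n) := by
  have h3 : √3 ≠ 0 := by positivity
  simp only [skew, cornerT, Prod.mk.injEq]
  constructor
  · field_simp; ring
  · field_simp

lemma height_cornerR (n : ℕ) : height (cornerR n) = 2 ^ n := by simp [height]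

lemma height_cornerT (n : ℕ) : height (cornerT n) = 2 ^ n := by simp [height]

def triangle (s : ℝ) : Set (ℝ × ℝ) := {q | 0 ≤ q.1 ∧ 0 ≤ q.2 ∧ q.1 + q.2 ≤ s}

lemma skew_mem_triangle {j : ℕ} {p : ℝ × ℝ} (hp : p ∈ gasketV j) : skew p ∈ triangle (2 ^ j) := by
  induction j generalizing p with
  | zero =>
    rcases hp with rfl | rfl | rfl <;> norm_num [triangle, Prod.mk_zero_zero]
  | succ n ih =>
    rw [gasketV_succ] at hp
    have h2n : (2 : ℝ) ^ (n + 1) = 2 ^ n + 2 ^ n := by ring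
    rcases hp with (hp | ⟨q, hq, rfl⟩) | ⟨q, hq, rfl⟩
    · obtain ⟨h1, h2, h3⟩ := ih hp
      exact ⟨h1, h2, h3.trans (pow_le_pow_right₀ one_le_two n.le_succ)⟩
    all_goals
      obtain ⟨h1, h2, h3⟩ := ih hq
      simp only [triangle, Set.mem_ofPred_eq, skew_add, skew_cornerR, skew_cornerT,
        Prod.fst_add, Prod.snd_add]
      refine ⟨by positivity, by positivity, by linarith⟩

lemma height_le {j : ℕ} {p : ℝ × ℝ} (hp : p ∈ gasketV j) : height p ≤ 2 ^ j :=
  (skew_mem_triangle hp).2.2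

lemma height_nonneg {j : ℕ} {p : ℝ × ℝ} (hp : p ∈ gasketV j) : 0 ≤ height p :=
  add_nonneg (skew_mem_triangle hp).1 (skew_mem_triangle hp).2.1

lemma gasketV_mono : Monotone gasketV :=
  monotone_nat_of_le_succ fun _ _ hp => Or.inl (Or.inl hp)

lemma gasketE_mono : Monotone gasketE :=
  monotone_nat_of_le_succ fun _ _ he => Or.inl (Or.inl he)

lemma zero_mem_gasketV (j : ℕ) : (0 : ℝ × ℝ) ∈ gasketV j :=
  gasketV_mono (Nat.zero_le j) (Or.inl rfl)

lemma cornerR_mem_gasketV (j : ℕ) : cornerR j ∈ gasketV j := by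
  induction j with
  | zero => exact Or.inr (Or.inl (by simp [cornerR]))
  | succ n ih => exact Or.inl (Or.inr ⟨cornerR n, ih, by ext <;> simp [cornerR, pow_succ]; ring⟩)

lemma cornerT_mem_gasketV (j : ℕ) : cornerT j ∈ gasketV j := by
  induction j with
  | zero => exact Or.inr (Or.inr (by ext <;> simp [cornerT]; ring))
  | succ n ih => exact Or.inr ⟨cornerT n, ih, by ext <;> simp [cornerT, pow_succ]; ring⟩

lemma gasketV_finite (j : ℕ) : (gasketV j).Finite := by
  induction j with
  | zero => exact ((Set.finite_singleton _).insert _).insert _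
  | succ n ih => exact (ih.union (ih.image _)).union (ih.image _)

lemma eq_of_skew_eq {p q : ℝ × ℝ} (h1 : (skew p).1 = (skew q).1) (h2 : (skew p).2 = (skew q).2) :
    p = q :=
  skew_injective (Prod.ext h1 h2)

lemma gasketV_inter_trSet_cornerR (j : ℕ) :
    gasketV j ∩ trSet (cornerR j) (gasketV j) = {cornerR j} := by
  refine Set.eq_singleton_iff_unique_mem.2
    ⟨⟨cornerR_mem_gasketV j, 0, zero_mem_gasketV j, add_zero _⟩, ?_⟩
  rintro _ ⟨hz, q, hq, rfl⟩
  obtain ⟨-, hz2, hz3⟩ := skew_mem_triangle hz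
  obtain ⟨hq1, hq2, -⟩ := skew_mem_triangle hq
  simp only [skew_add, skew_cornerR, Prod.fst_add, Prod.snd_add] at hz2 hz3
  apply eq_of_skew_eq <;> simp only [skew_add, skew_cornerR, Prod.fst_add, Prod.snd_add] <;>
    linarith

lemma gasketV_inter_trSet_cornerT (j : ℕ) :
    gasketV j ∩ trSet (cornerT j) (gasketV j) = {cornerT j} := by
  refine Set.eq_singleton_iff_unique_mem.2
    ⟨⟨cornerT_mem_gasketV j, 0, zero_mem_gasketV j, add_zero _⟩, ?_⟩
  rintro _ ⟨hz, q, hq, rfl⟩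
  obtain ⟨hz1, -, hz3⟩ := skew_mem_triangle hz
  obtain ⟨hq1, hq2, -⟩ := skew_mem_triangle hq
  simp only [skew_add, skew_cornerT, Prod.fst_add, Prod.snd_add] at hz1 hz3
  apply eq_of_skew_eq <;> simp only [skew_add, skew_cornerT, Prod.fst_add, Prod.snd_add] <;>
    linarith

lemma trSet_cornerR_inter_trSet_cornerT (j : ℕ) :
    trSet (cornerR j) (gasketV j) ∩ trSet (cornerT j) (gasketV j) = {cornerR j + cornerT j} := by
  refine Set.eq_singleton_iff_unique_mem.2
    ⟨⟨⟨cornerT j, cornerT_mem_gasketV j, rfl⟩, cornerR j, cornerR_mem_gasketV j, add_comm _ _⟩, ?_⟩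
  rintro _ ⟨⟨q, hq, rfl⟩, q', hq', hqq'⟩
  obtain ⟨hq1, hq2, hq3⟩ := skew_mem_triangle hq
  obtain ⟨hq1', hq2', hq3'⟩ := skew_mem_triangle hq'
  have h1 := congrArg (fun p => (skew p).1) hqq'
  have h2 := congrArg (fun p => (skew p).2) hqq'
  simp only [skew_add, skew_cornerR, skew_cornerT, Prod.fst_add, Prod.snd_add] at h1 h2
  apply eq_of_skew_eq <;> simp only [skew_add, skew_cornerR, skew_cornerT, Prod.fst_add,
    Prod.snd_add] <;> linarith

lemma ncard_gasketV_succ_inter (j : ℕ) (H : Set (ℝ × ℝ)) :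
    (gasketV (j + 1) ∩ H).ncard + ({cornerR j} ∩ H).ncard +
        ({cornerT j, cornerR j + cornerT j} ∩ H).ncard =
      (gasketV j ∩ H).ncard + (trSet (cornerR j) (gasketV j) ∩ H).ncard +
        (trSet (cornerT j) (gasketV j) ∩ H).ncard := by
  have hV := gasketV_finite j
  have hR : (trSet (cornerR j) (gasketV j)).Finite := hV.image _
  have hT : (trSet (cornerT j) (gasketV j)).Finite := hV.image _
  have hRT : gasketV j ∩ H ∩ (trSet (cornerT j) (gasketV j) ∩ H) ∪
      trSet (cornerR j) (gasketV j) ∩ H ∩ (trSet (cornerT j) (gasketV j) ∩ H) =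
      {cornerT j, cornerR j + cornerT j} ∩ H := by
    rw [← Set.inter_inter_distrib_right, ← Set.inter_inter_distrib_right,
      gasketV_inter_trSet_cornerT, trSet_cornerR_inter_trSet_cornerT,
      ← Set.union_inter_distrib_right, Set.singleton_union]
  have key := ncard_union_union_add (hV.inter_of_left H) (hR.inter_of_left H) (hT.inter_of_left H)
  rwa [← Set.inter_inter_distrib_right, gasketV_inter_trSet_cornerR, hRT,
    ← Set.union_inter_distrib_right, ← Set.union_inter_distrib_right, ← gasketV_succ] at key

lemma ncard_trSet (a : ℝ × ℝ) (S : Set (ℝ × ℝ)) : (trSet a S).ncard = S.ncard :=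
  Set.ncard_image_of_injective S (add_right_injective a)

lemma cornerT_ne_add (j : ℕ) : cornerT j ≠ cornerR j + cornerT j := by
  intro h
  have := congrArg Prod.fst h
  simp only [cornerR, cornerT, Prod.fst_add] at this
  have : (0 : ℝ) < 2 ^ j := by positivity
  linarith

lemma two_mul_ncard_gasketV (j : ℕ) : 2 * (gasketV j).ncard = 3 ^ (j + 1) + 3 := by
  induction j with
  | zero =>
    have : gasketV 0 = {0, (1, 0), (1 / 2, √3 / 2)} := rfl
    rw [this, Set.ncard_eq_three.2 ⟨_, _, _, by simp [Prod.ext_iff], by simp [Prod.ext_iff],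
      by norm_num, rfl⟩]
    norm_num
  | succ n ih =>
    have h := ncard_gasketV_succ_inter n Set.univ
    simp only [Set.inter_univ, ncard_trSet, Set.ncard_singleton,
      Set.ncard_pair (cornerT_ne_add n)] at h
    rw [pow_succ] at ih ⊢
    omega

def gasket : Set (ℝ × ℝ) := ⋃ n, gasketV n

def gasketBelow (r : ℝ) : Set (ℝ × ℝ) := gasket ∩ {p | height p < r}

lemma mem_gasketV_of_height_lt {m j : ℕ} {p : ℝ × ℝ} (hp : p ∈ gasketV m)
    (h : height p < 2 ^ j) : p ∈ gasketV j := by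
  induction m with
  | zero => exact gasketV_mono (Nat.zero_le j) hp
  | succ n ih =>
    rcases le_or_gt (n + 1) j with hnj | hjn
    · exact gasketV_mono hnj hp
    have h2 : (2 : ℝ) ^ j ≤ 2 ^ n := pow_le_pow_right₀ (by norm_num) (by omega)
    rw [gasketV_succ] at hp
    rcases hp with (hp | ⟨q, hq, rfl⟩) | ⟨q, hq, rfl⟩
    · exact ih hp
    · rw [height_add, height_cornerR] at h
      linarith [height_nonneg hq]
    · rw [height_add, height_cornerT] at h
      linarith [height_nonneg hq]

lemma gasketV_inter_height_lt {j : ℕ} {s : ℝ} (hs : s ≤ 2 ^ j) :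
    gasketV j ∩ {p | height p < s} = gasketBelow s := by
  ext p
  constructor
  · rintro ⟨hp, hps⟩
    exact ⟨Set.mem_iUnion.2 ⟨j, hp⟩, hps⟩
  · rintro ⟨hp, hps⟩
    obtain ⟨m, hm⟩ := Set.mem_iUnion.1 hp
    exact ⟨mem_gasketV_of_height_lt hm (hps.trans_le hs), hps⟩

lemma gasketBelow_finite (r : ℝ) : (gasketBelow r).Finite := by
  obtain ⟨j, hj⟩ := pow_unbounded_of_one_lt r (by norm_num : (1 : ℝ) < 2)
  rw [← gasketV_inter_height_lt hj.le]
  exact (gasketV_finite j).inter_of_left _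

lemma trSet_inter_height_lt (c : ℝ × ℝ) (S : Set (ℝ × ℝ)) (r : ℝ) :
    trSet c S ∩ {p | height p < r} = trSet c (S ∩ {p | height p < r - height c}) := by
  rw [trSet, ← Set.image_inter_preimage]
  congr 2
  ext q
  simp only [Set.mem_preimage, Set.mem_ofPred_eq, height_add]
  constructor <;> intro <;> linarith

lemma ncard_gasketBelow_add_two {j : ℕ} {r : ℝ} (h1 : 2 ^ j < r) (h2 : r ≤ 2 ^ (j + 1)) :
    (gasketBelow r).ncard + 2 = (gasketV j).ncard + 2 * (gasketBelow (r - 2 ^ j)).ncard := by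
  have hr : r - 2 ^ j ≤ 2 ^ j := by rw [pow_succ] at h2; linarith
  have hV : gasketV j ∩ {p | height p < r} = gasketV j :=
    Set.inter_eq_left.2 fun p hp => (height_le hp).trans_lt h1
  have hR : {cornerR j} ∩ {p | height p < r} = {cornerR j} :=
    Set.inter_eq_left.2 (by simpa [height_cornerR] using h1)
  have hT : {cornerT j, cornerR j + cornerT j} ∩ {p | height p < r} = {cornerT j} := by
    have hsum : ¬height (cornerR j + cornerT j) < r := by
      rw [height_add, height_cornerR, height_cornerT, pow_succ] at *
      linarith
    rw [Set.insert_inter_of_mem (by simpa [height_cornerT] using h1),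
      (Set.singleton_inter_eq_empty (s := {p | height p < r})).2 hsum, insert_empty_eq]
  have h := ncard_gasketV_succ_inter j {p | height p < r}
  rw [gasketV_inter_height_lt h2, hV, hR, hT, trSet_inter_height_lt, trSet_inter_height_lt,
    height_cornerR, height_cornerT, gasketV_inter_height_lt hr, ncard_trSet, ncard_trSet,
    Set.ncard_singleton, Set.ncard_singleton] at h
  omega

lemma gasketBelow_one : gasketBelow 1 = {0} := by
  refine Set.eq_singleton_iff_unique_mem.2 ⟨⟨Set.mem_iUnion.2 ⟨0, zero_mem_gasketV 0⟩, ?_⟩, ?_⟩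
  · simp [height, skew]
  · intro p hp
    rw [← gasketV_inter_height_lt (by norm_num : (1 : ℝ) ≤ 2 ^ 0)] at hp
    obtain ⟨hp | hp | hp, hlt⟩ := hp
    · exact hp
    · rw [hp] at hlt
      norm_num [height] at hlt
    · rw [Set.mem_singleton_iff.1 hp] at hlt
      norm_num [height, skew_apex] at hlt

lemma gasket_inter_neg : gasket ∩ -gasket = {0} := by
  refine Set.eq_singleton_iff_unique_mem.2
    ⟨⟨Set.mem_iUnion.2 ⟨0, zero_mem_gasketV 0⟩, ?_⟩, ?_⟩
  · rw [Set.mem_neg, neg_zero]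
    exact Set.mem_iUnion.2 ⟨0, zero_mem_gasketV 0⟩
  · rintro p ⟨hp, hnp⟩
    obtain ⟨m, hm⟩ := Set.mem_iUnion.1 hp
    obtain ⟨m', hm'⟩ := Set.mem_iUnion.1 (Set.mem_neg.1 hnp)
    obtain ⟨h1, h2, -⟩ := skew_mem_triangle hm
    obtain ⟨h1', h2', -⟩ := skew_mem_triangle hm'
    rw [skew_neg, Prod.fst_neg] at h1'
    rw [skew_neg, Prod.snd_neg] at h2'
    apply eq_of_skew_eq <;> simp only [skew_zero, Prod.fst_zero, Prod.snd_zero] <;> linarith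

def levelGraph (m : ℕ) : SimpleGraph (ℝ × ℝ) := SimpleGraph.fromRel fun a b => (a, b) ∈ gasketE m

def planeGraph : SimpleGraph (ℝ × ℝ) := SimpleGraph.fromRel fun a b => (a, b) ∈ SGE

lemma levelGraph_mono : Monotone levelGraph := fun _ _ h _ _ hab =>
  ⟨hab.1, hab.2.imp (gasketE_mono h ·) (gasketE_mono h ·)⟩

lemma levelGraph_le_planeGraph (m : ℕ) : levelGraph m ≤ planeGraph := fun _ _ hab =>
  ⟨hab.1, hab.2.imp (fun h => Or.inl (Set.mem_iUnion.2 ⟨m, h⟩))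
    (fun h => Or.inl (Set.mem_iUnion.2 ⟨m, h⟩))⟩

def negHom (m : ℕ) : levelGraph m →g planeGraph where
  toFun := Neg.neg
  map_rel' {a b} hab := ⟨neg_injective.ne hab.1,
    hab.2.imp (fun h => Or.inr ⟨(a, b), Set.mem_iUnion.2 ⟨m, h⟩, rfl⟩)
      (fun h => Or.inr ⟨(b, a), Set.mem_iUnion.2 ⟨m, h⟩, rfl⟩)⟩

lemma negHom_apply (m : ℕ) (p : ℝ × ℝ) : negHom m p = -p := rfl

def translateHom {j : ℕ} (c : ℝ × ℝ)
    (hc : ∀ e ∈ gasketE j, (c + e.1, c + e.2) ∈ gasketE (j + 1)) :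
    levelGraph j →g levelGraph (j + 1) where
  toFun := (c + ·)
  map_rel' {a b} hab := ⟨(add_right_injective c).ne hab.1,
    hab.2.imp (fun h => hc (a, b) h) (fun h => hc (b, a) h)⟩

lemma translateHom_apply {j : ℕ} (c : ℝ × ℝ)
    (hc : ∀ e ∈ gasketE j, (c + e.1, c + e.2) ∈ gasketE (j + 1)) (p : ℝ × ℝ) :
    translateHom c hc p = c + p := rfl

lemma exists_walk_append_translate {j : ℕ} {c q : ℝ × ℝ}
    (hc : ∀ e ∈ gasketE j, (c + e.1, c + e.2) ∈ gasketE (j + 1))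
    (wc : (levelGraph j).Walk 0 c) (wq : (levelGraph j).Walk 0 q) :
    ∃ w : (levelGraph (j + 1)).Walk 0 (c + q), w.length = wc.length + wq.length :=
  ⟨(wc.mapLe (levelGraph_mono j.le_succ)).append
    ((wq.map (translateHom c hc)).copy (by rw [translateHom_apply, add_zero])
      (translateHom_apply c hc q)), by
      rw [SimpleGraph.Walk.length_append, SimpleGraph.Walk.length_mapLe,
        SimpleGraph.Walk.length_copy, SimpleGraph.Walk.length_map]⟩

lemma exists_walk_length_eq_height {j : ℕ} {p : ℝ × ℝ} (hp : p ∈ gasketV j) :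
    ∃ w : (levelGraph j).Walk 0 p, (w.length : ℝ) = height p := by
  induction j generalizing p with
  | zero =>
    rcases hp with rfl | rfl | hp
    · exact ⟨.nil, by simp [height, Prod.mk_zero_zero]⟩
    · have h : (levelGraph 0).Adj 0 (1, 0) := ⟨by simp [Prod.ext_iff], Or.inl (Or.inl rfl)⟩
      exact ⟨h.toWalk, by rw [h.length_toWalk]; simp [height]⟩
    · have h : (levelGraph 0).Adj 0 (1 / 2, √3 / 2) :=
        ⟨by simp [Prod.ext_iff], Or.inl (Or.inr (Or.inl rfl))⟩
      rw [Set.mem_singleton_iff.1 hp]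
      exact ⟨h.toWalk, by rw [h.length_toWalk, height, skew_apex]; norm_num⟩
  | succ n ih =>
    rw [gasketV_succ] at hp
    rcases hp with (hp | ⟨q, hq, rfl⟩) | ⟨q, hq, rfl⟩
    · obtain ⟨w, hw⟩ := ih hp
      exact ⟨w.mapLe (levelGraph_mono n.le_succ), by simpa using hw⟩
    · obtain ⟨wc, hwc⟩ := ih (cornerR_mem_gasketV n)
      obtain ⟨wq, hwq⟩ := ih hq
      obtain ⟨w, hw⟩ := exists_walk_append_translate (c := cornerR n)
        (fun e he => Or.inl (Or.inr ⟨e, he, rfl⟩)) wc wq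
      exact ⟨w, by rw [hw, height_add]; push_cast; rw [hwc, hwq]⟩
    · obtain ⟨wc, hwc⟩ := ih (cornerT_mem_gasketV n)
      obtain ⟨wq, hwq⟩ := ih hq
      obtain ⟨w, hw⟩ := exists_walk_append_translate (c := cornerT n)
        (fun e he => Or.inr ⟨e, he, rfl⟩) wc wq
      exact ⟨w, by rw [hw, height_add]; push_cast; rw [hwc, hwq]⟩

lemma endpoints_of_mem_gasketE {m : ℕ} {e : (ℝ × ℝ) × (ℝ × ℝ)} (he : e ∈ gasketE m) :
    e.1 ∈ gasketV m ∧ e.2 ∈ gasketV m ∧ |height e.1 - height e.2| ≤ 1 := by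
  induction m generalizing e with
  | zero =>
    rcases he with rfl | rfl | he
    · exact ⟨Or.inl rfl, Or.inr (Or.inl rfl), by norm_num [height, Prod.mk_zero_zero]⟩
    · exact ⟨Or.inl rfl, Or.inr (Or.inr rfl), by norm_num [height, Prod.mk_zero_zero]⟩
    · rw [Set.mem_singleton_iff.1 he]
      exact ⟨Or.inr (Or.inl rfl), Or.inr (Or.inr rfl), by norm_num [height]⟩
  | succ n ih =>
    rw [gasketE_succ] at he
    rcases he with (he | ⟨e, he, rfl⟩) | ⟨e, he, rfl⟩
    · obtain ⟨h1, h2, h3⟩ := ih he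
      exact ⟨gasketV_mono n.le_succ h1, gasketV_mono n.le_succ h2, h3⟩
    all_goals
      obtain ⟨h1, h2, h3⟩ := ih he
      refine ⟨by simp [gasketV_succ, trSet, h1], by simp [gasketV_succ, trSet, h2], ?_⟩
      simpa only [height_add, add_sub_add_left_eq_sub] using h3

lemma endpoints_of_mem_SGE {a b : ℝ × ℝ} (h : (a, b) ∈ SGE) :
    a ∈ SGV ∧ b ∈ SGV ∧ |height a - height b| ≤ 1 := by
  rcases h with h | ⟨e, he, he'⟩
  · obtain ⟨m, hm⟩ := Set.mem_iUnion.1 h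
    obtain ⟨h1, h2, h3⟩ := endpoints_of_mem_gasketE hm
    exact ⟨Or.inl (Set.mem_iUnion.2 ⟨m, h1⟩), Or.inl (Set.mem_iUnion.2 ⟨m, h2⟩), h3⟩
  · obtain ⟨m, hm⟩ := Set.mem_iUnion.1 he
    obtain ⟨h1, h2, h3⟩ := endpoints_of_mem_gasketE hm
    obtain ⟨rfl, rfl⟩ := Prod.mk.injEq _ _ _ _ ▸ he'
    refine ⟨Or.inr ?_, Or.inr ?_, ?_⟩
    · rw [Set.mem_neg, neg_neg]; exact Set.mem_iUnion.2 ⟨m, h1⟩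
    · rw [Set.mem_neg, neg_neg]; exact Set.mem_iUnion.2 ⟨m, h2⟩
    · rwa [height_neg, height_neg, neg_sub_neg, abs_sub_comm]

lemma abs_height_sub_le_of_adj {x y : SGV} (h : SGGraph.Adj x y) :
    |height x - height y| ≤ 1 := by
  rw [SGGraph, SimpleGraph.fromRel_adj] at h
  rcases h.2 with h | h
  · exact (endpoints_of_mem_SGE h).2.2
  · rw [abs_sub_comm]; exact (endpoints_of_mem_SGE h).2.2

lemma exists_SGGraph_walk {a b : ℝ × ℝ} (w : planeGraph.Walk a b) (ha : a ∈ SGV) :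
    ∃ hb : b ∈ SGV, ∃ w' : SGGraph.Walk ⟨a, ha⟩ ⟨b, hb⟩, w'.length = w.length := by
  induction w with
  | nil => exact ⟨ha, .nil, rfl⟩
  | @cons a c b hac w ih =>
    have hc : c ∈ SGV :=
      hac.2.elim (fun h => (endpoints_of_mem_SGE h).2.1) (fun h => (endpoints_of_mem_SGE h).1)
    obtain ⟨hb, w', hw'⟩ := ih hc
    have hadj : SGGraph.Adj ⟨a, ha⟩ ⟨c, hc⟩ := by
      rw [planeGraph, SimpleGraph.fromRel_adj] at hac
      rw [SGGraph, SimpleGraph.fromRel_adj]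
      exact ⟨fun h => hac.1 (congrArg Subtype.val h), hac.2⟩
    exact ⟨hb, .cons hadj w',
      by rw [SimpleGraph.Walk.length_cons, hw', SimpleGraph.Walk.length_cons]⟩

lemma exists_planeGraph_walk {y : ℝ × ℝ} (hy : y ∈ SGV) :
    ∃ w : planeGraph.Walk 0 y, (w.length : ℝ) = |height y| := by
  rcases hy with hy | hy
  · obtain ⟨m, hm⟩ := Set.mem_iUnion.1 hy
    obtain ⟨w, hw⟩ := exists_walk_length_eq_height hm
    refine ⟨w.mapLe (levelGraph_le_planeGraph m), ?_⟩
    rw [SimpleGraph.Walk.length_mapLe, hw, abs_of_nonneg (height_nonneg hm)]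
  · obtain ⟨m, hm⟩ := Set.mem_iUnion.1 (Set.mem_neg.1 hy)
    obtain ⟨w, hw⟩ := exists_walk_length_eq_height hm
    refine ⟨(w.map (negHom m)).copy (by rw [negHom_apply, neg_zero])
      (by rw [negHom_apply, neg_neg]), ?_⟩
    rw [SimpleGraph.Walk.length_copy, SimpleGraph.Walk.length_map, hw, ← abs_neg, ← height_neg,
      abs_of_nonneg (height_nonneg hm)]

theorem dist_eq_abs_height (y : SGV) : (SGGraph.dist oSG y : ℝ) = |height y| := by
  obtain ⟨w, hw⟩ := exists_planeGraph_walk y.2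
  obtain ⟨_, w', hw'⟩ := exists_SGGraph_walk w oSG.2
  obtain ⟨w'', hw''⟩ := w'.reachable.exists_walk_length_eq_dist
  apply le_antisymm
  · rw [← hw, ← hw']
    exact_mod_cast SimpleGraph.dist_le w'
  · have h := w''.abs_sub_le_length (fun x : SGV => height x) fun _ _ => abs_height_sub_le_of_adj
    have h0 : height (oSG : ℝ × ℝ) = 0 := by simp [oSG, height, Prod.mk_zero_zero]
    calc |height y| = |height (oSG : ℝ × ℝ) - height y| := by rw [h0, zero_sub, abs_neg]
      _ ≤ w''.length := h
      _ = SGGraph.dist oSG y := by exact_mod_cast hw''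

def sgBall (r : ℝ) : Set SGV := {y | (SGGraph.dist oSG y : ℝ) < r}

lemma sgBall_mono : Monotone sgBall := fun _ _ h _ hy => lt_of_lt_of_le hy h

lemma height_nonneg_of_mem_gasket {p : ℝ × ℝ} (hp : p ∈ gasket) : 0 ≤ height p := by
  obtain ⟨m, hm⟩ := Set.mem_iUnion.1 hp
  exact height_nonneg hm

lemma image_val_sgBall (r : ℝ) :
    Subtype.val '' sgBall r = gasketBelow r ∪ -gasketBelow r := by
  ext p
  simp only [sgBall, Set.mem_image, Set.mem_ofPred_eq, dist_eq_abs_height]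
  constructor
  · rintro ⟨⟨p, hp | hp⟩, hlt, rfl⟩
    · exact Or.inl ⟨hp, (le_abs_self _).trans_lt hlt⟩
    · exact Or.inr ⟨hp, show height (-p) < r by rw [height_neg]; exact (neg_le_abs _).trans_lt hlt⟩
  · rintro (⟨hp, hlt⟩ | ⟨hp, hlt⟩)
    · exact ⟨⟨p, Or.inl hp⟩, by rwa [abs_of_nonneg (height_nonneg_of_mem_gasket hp)], rfl⟩
    · refine ⟨⟨p, Or.inr hp⟩, ?_, rfl⟩
      have h := height_nonneg_of_mem_gasket hp
      have hlt' : height (-p) < r := hlt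
      rw [height_neg] at h hlt'
      rwa [abs_of_nonpos (by linarith)]

lemma gasketBelow_inter_neg {r : ℝ} (hr : 0 < r) : gasketBelow r ∩ -gasketBelow r = {0} := by
  refine Set.Subset.antisymm (fun p hp => gasket_inter_neg ▸ ⟨hp.1.1, hp.2.1⟩) ?_
  have h0 : (0 : ℝ × ℝ) ∈ gasketBelow r :=
    ⟨Set.mem_iUnion.2 ⟨0, zero_mem_gasketV 0⟩, by simpa [height] using hr⟩
  exact Set.singleton_subset_iff.2 ⟨h0, by rwa [Set.mem_neg, neg_zero]⟩

lemma ncard_sgBall_add_one {r : ℝ} (hr : 0 < r) :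
    (sgBall r).ncard + 1 = 2 * (gasketBelow r).ncard := by
  have hfin := gasketBelow_finite r
  have h := Set.ncard_union_add_ncard_inter _ _ hfin hfin.neg
  rw [gasketBelow_inter_neg hr, Set.ncard_singleton, Set.ncard_neg, ← image_val_sgBall,
    Set.ncard_image_of_injective _ Subtype.val_injective] at h
  omega

lemma sgBall_finite (r : ℝ) : (sgBall r).Finite := by
  refine Set.Finite.of_finite_image ?_ Subtype.val_injective.injOn
  rw [image_val_sgBall]
  exact (gasketBelow_finite r).union (gasketBelow_finite r).neg

lemma ncard_sgBall_one : (sgBall 1).ncard = 1 := by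
  have h := ncard_sgBall_add_one one_pos
  rw [gasketBelow_one, Set.ncard_singleton] at h
  omega

lemma ncard_sgBall_eq {j r : ℕ} (h1 : 2 ^ j < r) (h2 : r ≤ 2 ^ (j + 1)) :
    (sgBall r).ncard = 3 ^ (j + 1) + 2 * (sgBall (r - 2 ^ j : ℕ)).ncard := by
  have hr : (0 : ℝ) < r := by exact_mod_cast (Nat.zero_le _).trans_lt h1
  have hr' : (0 : ℝ) < (r - 2 ^ j : ℕ) := by norm_cast; omega
  have hball := ncard_sgBall_add_one hr
  have hball' := ncard_sgBall_add_one hr'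
  have hbelow := ncard_gasketBelow_add_two (j := j) (r := r) (by exact_mod_cast h1)
    (by exact_mod_cast h2)
  have hV := two_mul_ncard_gasketV j
  rw [show (r : ℝ) - 2 ^ j = (r - 2 ^ j : ℕ) by push_cast [Nat.cast_sub h1.le]; rfl] at hbelow
  omega

def GasketRecursion (b : ℕ → ℝ) : Prop :=
  ∀ j r, 2 ^ j < r → r ≤ 2 ^ (j + 1) → b r = 3 ^ (j + 1) + 2 * b (r - 2 ^ j)

lemma exists_pow_lt_le {x : ℕ} (hx : 2 ≤ x) : ∃ k, 2 ^ k < x ∧ x ≤ 2 ^ (k + 1) :=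
  ⟨Nat.log 2 (x - 1), by have := Nat.pow_log_le_self 2 (show x - 1 ≠ 0 by omega); omega,
    by have := Nat.lt_pow_succ_log_self one_lt_two (x - 1); omega⟩

namespace GasketRecursion

variable {b : ℕ → ℝ}

lemma apply_two_pow (hb : GasketRecursion b) (h1 : b 1 = 1) (j : ℕ) :
    b (2 ^ j) = 3 ^ (j + 1) - 2 ^ (j + 1) := by
  induction j with
  | zero => norm_num [h1]
  | succ n ih =>
    have hp : 0 < 2 ^ n := Nat.two_pow_pos n
    rw [hb n _ (by rw [pow_succ]; omega) le_rfl, show 2 ^ (n + 1) - 2 ^ n = 2 ^ n by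
      rw [pow_succ]; omega, ih]
    ring

/-- The top layer of depth `y` doubles with each level. -/
lemma sub_apply_two_pow_sub (hb : GasketRecursion b) {i y : ℕ} (hy : y < 2 ^ i) (d : ℕ) :
    b (2 ^ (i + d)) - b (2 ^ (i + d) - y) = 2 ^ d * (b (2 ^ i) - b (2 ^ i - y)) := by
  induction d with
  | zero => simp
  | succ d ih =>
    have hid : 2 ^ i ≤ 2 ^ (i + d) := Nat.pow_le_pow_right two_pos (by omega)
    have hsucc : 2 ^ (i + (d + 1)) = 2 ^ (i + d) + 2 ^ (i + d) := by ring
    rw [hb (i + d) (2 ^ (i + (d + 1))) (by omega) (by rw [← add_assoc]),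
      hb (i + d) (2 ^ (i + (d + 1)) - y) (by omega) (by rw [← add_assoc]; omega),
      show 2 ^ (i + (d + 1)) - 2 ^ (i + d) = 2 ^ (i + d) by omega,
      show 2 ^ (i + (d + 1)) - y - 2 ^ (i + d) = 2 ^ (i + d) - y by omega, pow_succ]
    linear_combination 2 * ih

lemma le_three_pow (hb : GasketRecursion b) (h1 : b 1 = 1) {j r : ℕ} (hr1 : 1 ≤ r)
    (hr : r ≤ 2 ^ j) : b r ≤ 3 ^ (j + 1) := by
  induction j generalizing r with
  | zero => rw [show r = 1 by simpa using le_antisymm hr hr1, h1]; norm_num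
  | succ n ih =>
    rcases le_or_gt r (2 ^ n) with hrn | hrn
    · exact (ih hr1 hrn).trans (pow_le_pow_right₀ (by norm_num) n.succ.le_succ)
    · rw [hb n r hrn hr]
      have := ih (r := r - 2 ^ n) (by omega) (by rw [pow_succ] at hr; omega)
      rw [pow_succ _ (n + 1)]
      linarith

lemma window_eq_two_mul (hb : GasketRecursion b) {k x w : ℕ} (hw : w < x) (hx : x ≤ 2 ^ k) :
    b (2 ^ k + x) - b (2 ^ k + x - w) = 2 * (b x - b (x - w)) := by
  rw [hb k _ (by omega) (by rw [pow_succ]; omega), hb k (2 ^ k + x - w) (by omega)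
    (by rw [pow_succ]; omega), Nat.add_sub_cancel_left,
    show 2 ^ k + x - w - 2 ^ k = x - w by omega]
  ring

lemma window_eq (hb : GasketRecursion b) (h1 : b 1 = 1) {i x : ℕ} (d : ℕ) (hx0 : 0 < x)
    (hx : x ≤ 2 ^ i) :
    b (2 ^ (i + d) + x) - b (2 ^ (i + d) + x - 2 ^ i) =
      2 ^ d * 3 ^ (i + 1) + (2 - 2 ^ d) * b x := by
  have hid : 2 ^ i ≤ 2 ^ (i + d) := Nat.pow_le_pow_right two_pos (by omega)
  have htop := hb.sub_apply_two_pow_sub (i := i) (y := 2 ^ i - x) (by omega) d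
  rw [show 2 ^ i - (2 ^ i - x) = x by omega, hb.apply_two_pow h1, hb.apply_two_pow h1,
    ← show 2 ^ (i + d) + x - 2 ^ i = 2 ^ (i + d) - (2 ^ i - x) by omega] at htop
  rw [hb (i + d) _ (by omega) (by rw [pow_succ]; omega), Nat.add_sub_cancel_left]
  linear_combination htop

end GasketRecursion

lemma six_mul_sub_le_six_pow {d : ℕ} (hd : 1 ≤ d) : 6 * ((3 : ℝ) ^ d - 2 ^ d) ≤ 6 ^ d := by
  induction d, hd using Nat.le_induction with
  | base => norm_num
  | succ d _ ih =>
    have h3 : (3 : ℝ) ≤ 3 ^ d := le_self_pow₀ (by norm_num) (by omega)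
    have h6 : (6 : ℝ) ^ d = 2 ^ d * 3 ^ d := by rw [← mul_pow]; norm_num
    rw [pow_succ, pow_succ, pow_succ]
    nlinarith [mul_le_mul_of_nonneg_left h3 (by positivity : (0 : ℝ) ≤ 2 ^ d)]

lemma window_base_le (d i : ℕ) {B : ℝ} (hB : 0 ≤ B) :
    3 ^ (d + 1 + 1) * (2 ^ d * 3 ^ (i + 1) + (2 - 2 ^ d) * B) ≤
      2 ^ (d + 1 + 3) * (3 ^ (i + d + 1) + 2 * B) := by
  have h3 : (0 : ℝ) ≤ 3 ^ (i + d + 1) := by positivity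
  rcases d with _ | d
  · norm_num
    linarith
  · have h2 : (2 : ℝ) ≤ 2 ^ (d + 1) := by
      calc (2 : ℝ) = 2 ^ 1 := by norm_num
        _ ≤ 2 ^ (d + 1) := pow_le_pow_right₀ (by norm_num) (by omega)
    have hneg : 3 ^ (d + 1 + 1 + 1) * ((2 - 2 ^ (d + 1)) * B) ≤ 0 :=
      mul_nonpos_of_nonneg_of_nonpos (by positivity)
        (mul_nonpos_of_nonpos_of_nonneg (by linarith) hB)
    have hpos : 0 ≤ 2 ^ (d + 1) * 3 ^ (i + (d + 1) + 1) * (7 : ℝ) +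
        2 ^ (d + 1 + 1 + 3) * (2 * B) := by
      positivity
    linear_combination hneg + hpos

lemma window_step_le {d m k : ℕ} (hd : 1 ≤ d) {D B : ℝ} (hD : 3 ^ (m + 1) * D ≤ 2 ^ (m + 3) * B)
    (hB : B ≤ 3 ^ (k + 2)) :
    3 ^ (m + d + 1) * (2 * D) ≤ 2 ^ (m + d + 3) * (3 ^ (k + d + 1) + 2 * B) := by
  have h6 := six_mul_sub_le_six_pow hd
  have h23 : (2 : ℝ) ^ d ≤ 3 ^ d := pow_le_pow_left₀ (by norm_num) (by norm_num) d
  have hinner : 2 * 3 ^ d * B ≤ 2 ^ d * (3 ^ (k + d + 1) + 2 * B) := by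
    rw [show (6 : ℝ) ^ d = 2 ^ d * 3 ^ d by rw [← mul_pow]; norm_num] at h6
    have hQ : (0 : ℝ) ≤ 3 ^ (k + 1) := by positivity
    linear_combination 2 * mul_le_mul_of_nonneg_left hB (sub_nonneg.2 h23) +
      mul_le_mul_of_nonneg_right h6 hQ
  calc 3 ^ (m + d + 1) * (2 * D) = 2 * 3 ^ d * (3 ^ (m + 1) * D) := by ring
    _ ≤ 2 * 3 ^ d * (2 ^ (m + 3) * B) := by gcongr
    _ = 2 ^ (m + 3) * (2 * 3 ^ d * B) := by ring
    _ ≤ 2 ^ (m + 3) * (2 ^ d * (3 ^ (k + d + 1) + 2 * B)) := by gcongr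
    _ = 2 ^ (m + d + 3) * (3 ^ (k + d + 1) + 2 * B) := by ring

theorem GasketRecursion.window_le {b : ℕ → ℝ} (hb : GasketRecursion b) (h1 : b 1 = 1)
    (h0 : ∀ r, 0 ≤ b r) {k n m : ℕ} (hkn : 2 ^ k < n) (hnk : n ≤ 2 ^ (k + 1)) (hmk : m ≤ k) :
    3 ^ (m + 1) * (b n - b (n - 2 ^ (k + 1 - m))) ≤ 2 ^ (m + 3) * b n := by
  induction k using Nat.strong_induction_on generalizing n m with
  | _ k ih =>
  rcases Nat.eq_zero_or_pos m with rfl | hm0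
  · norm_num
    linarith [h0 n, h0 (n - 2 ^ (k + 1))]
  obtain ⟨x, rfl⟩ : ∃ x, n = 2 ^ k + x := ⟨n - 2 ^ k, by omega⟩
  obtain ⟨i, d, rfl, rfl⟩ : ∃ i d, k = i + d ∧ m = d + 1 := ⟨k + 1 - m, m - 1, by omega, by omega⟩
  rw [show i + d + 1 - (d + 1) = i by omega]
  have hx : b (2 ^ (i + d) + x) = 3 ^ (i + d + 1) + 2 * b x := by
    rw [hb _ _ hkn hnk, Nat.add_sub_cancel_left]
  rcases le_or_gt x (2 ^ i) with hxi | hxi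
  · rw [hb.window_eq h1 d (by omega) hxi, hx]
    exact window_base_le d i (h0 x)
  have hi : 2 ≤ 2 ^ i := Nat.le_self_pow (by omega) 2
  obtain ⟨k', hk'x, hxk'⟩ := exists_pow_lt_le (by omega : 2 ≤ x)
  have hk' : k' < i + d := by
    rw [pow_succ] at hnk
    exact (Nat.pow_lt_pow_iff_right (a := 2) (by norm_num)).1 (by omega)
  have hik' : i < k' + 1 := (Nat.pow_lt_pow_iff_right (by norm_num)).1 (hxi.trans_le hxk')
  have hIH := @ih k' hk' x (k' + 1 - i) hk'x hxk' (by omega)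
  have hstep := window_step_le (d := i + d - k') (k := k') (by omega) hIH
    (hb.le_three_pow h1 (by omega) hxk')
  rw [show k' + 1 - (k' + 1 - i) = i by omega, show k' + 1 - i + (i + d - k') = d + 1 by omega,
    show k' + (i + d - k') = i + d by omega] at hstep
  rw [hb.window_eq_two_mul hxi (by rw [pow_succ] at hnk; omega), hx]
  linarith

lemma gasketRecursion_ncard_sgBall : GasketRecursion fun r => ((sgBall r).ncard : ℝ) :=
  fun _ _ h1 h2 => by simp only [ncard_sgBall_eq h1 h2]; push_cast; rfl

lemma two_div_three_pow_le_rpow {ε : ℝ} {m : ℕ} (hε : ((2 : ℝ) ^ (m + 1))⁻¹ ≤ ε) :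
    (2 / 3 : ℝ) ^ (m + 1) ≤ ε ^ (Real.log 3 / Real.log 2 - 1) := by
  have hγ : 0 ≤ Real.log 3 / Real.log 2 - 1 := by
    rw [sub_nonneg, one_le_div (Real.log_pos one_lt_two)]
    exact Real.log_le_log two_pos (by norm_num)
  have h2γ : (2 : ℝ) ^ (Real.log 3 / Real.log 2 - 1) = 3 / 2 := by
    rw [Real.rpow_sub two_pos, Real.rpow_one, Real.log_div_log,
      Real.rpow_logb two_pos (by norm_num) (by norm_num)]
  calc (2 / 3 : ℝ) ^ (m + 1) = ((2 : ℝ) ^ (m + 1))⁻¹ ^ (Real.log 3 / Real.log 2 - 1) := by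
        rw [Real.inv_rpow (by positivity), ← Real.rpow_pow_comm zero_le_two, h2γ, ← inv_pow]
        norm_num
    _ ≤ ε ^ (Real.log 3 / Real.log 2 - 1) := Real.rpow_le_rpow (by positivity) hε hγ

lemma natCast_sub_le_mul_one_sub {n w : ℕ} {ε : ℝ} (h : n * ε ≤ w) (hε : ε ≤ 1) :
    ((n - w : ℕ) : ℝ) ≤ n * (1 - ε) := by
  rcases le_total w n with hwn | hnw
  · rw [Nat.cast_sub hwn]
    linarith
  · rw [Nat.sub_eq_zero_of_le hnw, Nat.cast_zero]
    exact mul_nonneg n.cast_nonneg (by linarith)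

lemma exists_dyadic_scale {n k : ℕ} {ε : ℝ} (hn : 0 < n) (hnk : n ≤ 2 ^ (k + 1))
    (hε : 1 / (n : ℝ) < ε) (hε1 : ε < 1) :
    ∃ m ≤ k, (n : ℝ) * ε ≤ 2 ^ (k + 1 - m) ∧ ((2 : ℝ) ^ (m + 1))⁻¹ ≤ ε := by
  have hε0 : 0 < ε := lt_of_le_of_lt (by positivity) hε
  obtain ⟨m, hm, hm'⟩ := exists_nat_pow_near (one_le_inv₀ hε0 |>.2 hε1.le) one_lt_two
  have hnk' : (n : ℝ) ≤ 2 ^ (k + 1) := by exact_mod_cast hnk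
  have hmk : m ≤ k := by
    have : (2 : ℝ) ^ m < 2 ^ (k + 1) := by
      rw [one_div, inv_lt_comm₀ (by exact_mod_cast hn) hε0] at hε
      linarith
    have := (pow_lt_pow_iff_right₀ one_lt_two).1 this
    omega
  refine ⟨m, hmk, ?_, by rw [inv_le_comm₀ (by positivity) hε0]; exact hm'.le⟩
  have h2m : (2 : ℝ) ^ m * ε ≤ 1 := by
    simpa [hε0.ne'] using mul_le_mul_of_nonneg_right hm hε0.le
  calc (n : ℝ) * ε ≤ 2 ^ (k + 1) * ε := by gcongr
    _ = 2 ^ (k + 1 - m) * (2 ^ m * ε) := by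
      rw [← mul_assoc, ← pow_add, Nat.sub_add_cancel (by omega)]
    _ ≤ 2 ^ (k + 1 - m) := mul_le_of_le_one_right (by positivity) h2m

lemma ncard_sgBall_sub_le {k n m : ℕ} (hkn : 2 ^ k < n) (hnk : n ≤ 2 ^ (k + 1)) (hmk : m ≤ k)
    {ρ : ℝ} (hρ : ((n - 2 ^ (k + 1 - m) : ℕ) : ℝ) ≤ ρ) :
    ((sgBall n).ncard : ℝ) - (sgBall ρ).ncard ≤ 4 * (2 / 3) ^ (m + 1) * (sgBall n).ncard := by
  have hball := Set.ncard_le_ncard (sgBall_mono hρ) (sgBall_finite _)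
  have hwin := gasketRecursion_ncard_sgBall.window_le (by exact_mod_cast ncard_sgBall_one)
    (fun _ => Nat.cast_nonneg _) hkn hnk hmk
  rw [show (2 : ℝ) ^ (m + 3) = 3 ^ (m + 1) * (4 * (2 / 3) ^ (m + 1)) by
    rw [div_pow]; field_simp; ring, mul_assoc, mul_le_mul_iff_right₀ (by positivity)] at hwin
  have : ((sgBall (n - 2 ^ (k + 1 - m) : ℕ)).ncard : ℝ) ≤ (sgBall ρ).ncard := by
    exact_mod_cast hball
  linarith

/-- On the doubly infinite Sierpinski gasket graph, with `α = log 3 / log 2`, for every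
`1/n < ε < 1` the annulus satisfies `|B_o(n)| - |B_o(n(1-ε))| ≤ 4 ε^{α-1} |B_o(n)|`, where
`B_o(r)` is the open ball of radius `r` about the origin in the graph metric. -/
theorem annulus_bound (n : ℕ) (ε : ℝ) (hε : 1 / (n : ℝ) < ε) (hε1 : ε < 1) :
    (({y : SGV | (SGGraph.dist oSG y : ℝ) < (n : ℝ)}.ncard : ℝ) -
        ({y : SGV | (SGGraph.dist oSG y : ℝ) < (n : ℝ) * (1 - ε)}.ncard : ℝ)) ≤
      4 * ε ^ (Real.log 3 / Real.log 2 - 1) *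
        ({y : SGV | (SGGraph.dist oSG y : ℝ) < (n : ℝ)}.ncard : ℝ) := by
  rcases lt_or_ge n 2 with hn | hn
  · interval_cases n
    · simp [not_lt.2 (Nat.cast_nonneg _)]
    · norm_num at hε
      linarith
  obtain ⟨k, hkn, hnk⟩ := exists_pow_lt_le hn
  obtain ⟨m, hmk, hnε, hεm⟩ := exists_dyadic_scale (by omega) hnk hε hε1
  have hshrink : ((n - 2 ^ (k + 1 - m) : ℕ) : ℝ) ≤ n * (1 - ε) :=
    natCast_sub_le_mul_one_sub (by exact_mod_cast hnε) hε1.le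
  calc ((sgBall n).ncard : ℝ) - (sgBall (n * (1 - ε))).ncard
      ≤ 4 * (2 / 3) ^ (m + 1) * (sgBall n).ncard := ncard_sgBall_sub_le hkn hnk hmk hshrink
    _ ≤ 4 * ε ^ (Real.log 3 / Real.log 2 - 1) * (sgBall n).ncard := by
      gcongr
      exact two_div_three_pow_le_rpow hεm

end IDLA
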